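/- arXiv:2006.03916 — 2 statements merged into one kernel-verified Lean document; each statement's English description precedes it below -/
import Mathlib

section
/- Let E and F be real inner product spaces, let K ⊆ E × F be a convex set, let ω̄ = (φ̄, ψ̄) ∈ K, let g ∈ E and σ > 0. Suppose ŵ = (φ̂, ψ̂) ∈ K minimizes the function f(φ, ψ) = ⟨g, φ⟩ + (σ/2)‖(φ, ψ) − (φ̄, ψ̄)‖² over K. Then ⟨g, φ̄ − φ̂⟩ ≥ σ·‖ω̄ − ŵ‖², where ‖ω̄ − ŵ‖² = ‖φ̄ − φ̂‖² + ‖ψ̄ − ψ̂‖². In particular, if ŵ ≠ ω̄ then ⟨g, φ̂ − φ̄⟩ < 0. -/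
open RealInnerProductSpace

/-- Lemma 4: the minimizer `what = (φ̂, ψ̂)` of
`f(φ, ψ) = ⟪g, φ⟫ + (σ/2)(‖φ − φbar‖² + ‖ψ − ψbar‖²)` over a convex set `K ∋ ωbar`
satisfies `⟪g, φbar − φ̂⟫ ≥ σ‖ωbar − what‖²`; in particular, if `what ≠ ωbar` then
`(φ̂ − φbar)` is a descent direction: `⟪g, φ̂ − φbar⟫ < 0`. -/
theorem stmt7 {E F : Type*} [NormedAddCommGroup E] [InnerProductSpace ℝ E]
    [NormedAddCommGroup F] [InnerProductSpace ℝ F]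
    (K : Set (E × F)) (hK : Convex ℝ K)
    (ωbar : E × F) (hωbar : ωbar ∈ K) (g : E) (σ : ℝ) (hσ : 0 < σ)
    (f : E × F → ℝ)
    (hf : ∀ p : E × F, f p = ⟪g, p.1⟫ + σ / 2 * (‖p.1 - ωbar.1‖ ^ 2 + ‖p.2 - ωbar.2‖ ^ 2))
    (what : E × F) (hwhatK : what ∈ K) (hmin : ∀ p ∈ K, f what ≤ f p) :
    σ * (‖ωbar.1 - what.1‖ ^ 2 + ‖ωbar.2 - what.2‖ ^ 2) ≤ ⟪g, ωbar.1 - what.1⟫ ∧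
      (what ≠ ωbar → ⟪g, what.1 - ωbar.1⟫ < 0) := by
  set A := ωbar.1 - what.1 with hA
  set B := ωbar.2 - what.2 with hB
  set D := ‖A‖ ^ 2 + ‖B‖ ^ 2 with hDdef
  have hD0 : 0 ≤ D := by positivity
  clear_value A B D
  have key : ∀ t : ℝ, 0 < t → t ≤ 1 → σ * (1 - t / 2) * D ≤ ⟪g, A⟫ := by
    intro t ht ht1
    have hmem : ((1 - t) • what + t • ωbar) ∈ K :=
      hK hwhatK hωbar (by linarith) ht.le (by ring)
    have h := hmin _ hmem
    rw [hf, hf] at h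
    have h1 : ((1 - t) • what + t • ωbar).1 = what.1 + t • A := by
      simp only [Prod.fst_add, Prod.smul_fst, hA]
      module
    have h2 : ((1 - t) • what + t • ωbar).2 = what.2 + t • B := by
      simp only [Prod.snd_add, Prod.smul_snd, hB]
      module
    rw [h1, h2] at h
    have e1 : ‖what.1 + t • A - ωbar.1‖ ^ 2 = (1 - t) ^ 2 * ‖A‖ ^ 2 := by
      have : what.1 + t • A - ωbar.1 = (t - 1) • A := by rw [hA]; module
      rw [this, norm_smul, mul_pow, Real.norm_eq_abs, sq_abs]
      ring
    have e2 : ‖what.2 + t • B - ωbar.2‖ ^ 2 = (1 - t) ^ 2 * ‖B‖ ^ 2 := by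
      have : what.2 + t • B - ωbar.2 = (t - 1) • B := by rw [hB]; module
      rw [this, norm_smul, mul_pow, Real.norm_eq_abs, sq_abs]
      ring
    have e3 : ‖what.1 - ωbar.1‖ = ‖A‖ := by rw [hA, norm_sub_rev]
    have e4 : ‖what.2 - ωbar.2‖ = ‖B‖ := by rw [hB, norm_sub_rev]
    have e5 : ⟪g, what.1 + t • A⟫ = ⟪g, what.1⟫ + t * ⟪g, A⟫ := by
      rw [inner_add_right, real_inner_smul_right]
    rw [e1, e2, e3, e4, e5] at h
    have h' : σ / 2 * (2 * t - t ^ 2) * D ≤ t * ⟪g, A⟫ := by rw [hDdef]; nlinarith [h]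
    nlinarith [mul_pos ht ht, h']
  have goal1 : σ * D ≤ ⟪g, A⟫ := by
    apply le_of_forall_pos_le_add
    intro ε hε
    rcases eq_or_lt_of_le hD0 with hD | hD
    · have := key 1 one_pos le_rfl
      rw [← hD] at this ⊢
      linarith
    · set t := min 1 (ε / (σ * D)) with htdef
      have ht0 : 0 < t := lt_min one_pos (div_pos hε (mul_pos hσ hD))
      have ht1 : t ≤ 1 := min_le_left _ _
      have hte : t ≤ ε / (σ * D) := min_le_right _ _
      clear_value t
      have h := key t ht0 ht1
      have hbd : σ * t * D ≤ ε := by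
        have := (le_div_iff₀ (mul_pos hσ hD)).mp hte
        nlinarith
      have hexp : σ * (1 - t / 2) * D = σ * D - σ * t * D / 2 := by ring
      linarith
  refine ⟨goal1, ?_⟩
  intro hne
  have hDpos : 0 < D := by
    rcases eq_or_lt_of_le hD0 with hD | hD
    · exfalso
      have hA0 : ‖A‖ ^ 2 = 0 := by nlinarith [sq_nonneg ‖A‖, sq_nonneg ‖B‖]
      have hB0 : ‖B‖ ^ 2 = 0 := by nlinarith [sq_nonneg ‖A‖, sq_nonneg ‖B‖]
      have hA' : A = 0 := by simpa using hA0
      have hB' : B = 0 := by simpa using hB0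
      apply hne
      have h1 : what.1 = ωbar.1 := by
        rw [hA, sub_eq_zero] at hA'; exact hA'.symm
      have h2 : what.2 = ωbar.2 := by
        rw [hB, sub_eq_zero] at hB'; exact hB'.symm
      exact Prod.ext h1 h2
    · exact hD
  have hneg : ⟪g, what.1 - ωbar.1⟫ = -⟪g, A⟫ := by
    rw [hA, ← inner_neg_right, neg_sub]
  rw [hneg]
  nlinarith [mul_pos hσ hDpos]
end

section
/- Let E and F be real inner product spaces and J : E → ℝ a differentiable function, bounded below, whose gradient ∇J is Lipschitz continuous with constant κ > 0. Let σ > 0 and α ∈ (0, 2σ/κ). Let (ωᵏ) = ((φᵏ, ψᵏ)) and (ŵᵏ) = ((φ̂ᵏ, ψ̂ᵏ)) be sequences in E × F satisfying, for every k: ⟨∇J(φᵏ), φ̂ᵏ − φᵏ⟩ ≤ −σ·‖ŵᵏ − ωᵏ‖² and ωᵏ⁺¹ = (1−α)·ωᵏ + α·ŵᵏ. Then the sequence (J(φᵏ)) is nonincreasing and converges to a finite limit, and ‖ŵᵏ − ωᵏ‖ → 0 as k → ∞. -/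
open RealInnerProductSpace Filter

lemma descent_lemma {E : Type*} [NormedAddCommGroup E] [InnerProductSpace ℝ E] [CompleteSpace E]
    (J : E → ℝ) (G : E → E) (hJ : ∀ x, HasGradientAt J (G x) x)
    (κ : ℝ) (hLip : ∀ x y, ‖G x - G y‖ ≤ κ * ‖x - y‖) (x y : E) :
    J y ≤ J x + ⟪G x, y - x⟫ + κ / 2 * ‖y - x‖ ^ 2 := by
  set v := y - x with hv
  set h : ℝ → ℝ := fun t => J (x + t • v) - t * ⟪G x, v⟫ - κ / 2 * t ^ 2 * ‖v‖ ^ 2 with hh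
  have hline : ∀ t : ℝ, HasDerivAt (fun t : ℝ => x + t • v) v t := by
    intro t
    simpa using ((hasDerivAt_id t).smul_const v).const_add x
  have hd : ∀ t : ℝ, HasDerivAt h
      (⟪G (x + t • v), v⟫ - ⟪G x, v⟫ - κ * t * ‖v‖ ^ 2) t := by
    intro t
    have h1 : HasDerivAt (fun t : ℝ => J (x + t • v)) ⟪G (x + t • v), v⟫ t := by
      have := ((hasGradientAt_iff_hasFDerivAt.mp (hJ (x + t • v)))).comp_hasDerivAt t (hline t)
      exact this
    have h2 : HasDerivAt (fun t : ℝ => t * ⟪G x, v⟫) ⟪G x, v⟫ t := by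
      simpa using (hasDerivAt_id t).mul_const (⟪G x, v⟫)
    have h3 : HasDerivAt (fun t : ℝ => κ / 2 * t ^ 2 * ‖v‖ ^ 2) (κ * t * ‖v‖ ^ 2) t := by
      have : HasDerivAt (fun t : ℝ => t ^ 2) (2 * t) t := by
        simpa using hasDerivAt_pow 2 t
      have := ((this.const_mul (κ / 2)).mul_const (‖v‖ ^ 2))
      rw [show (κ * t * ‖v‖ ^ 2) = κ / 2 * (2 * t) * ‖v‖ ^ 2 by ring]
      exact this
    exact (h1.sub h2).sub h3
  have hanti : AntitoneOn h (Set.Icc 0 1) := by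
    apply antitoneOn_of_deriv_nonpos (convex_Icc 0 1)
    · exact fun t _ => ((hd t).continuousAt).continuousWithinAt
    · intro t ht
      exact ((hd t).differentiableAt).differentiableWithinAt
    · intro t ht
      rw [interior_Icc] at ht
      rw [(hd t).deriv]
      have hineq : ⟪G (x + t • v) - G x, v⟫ ≤ κ * t * ‖v‖ ^ 2 := by
        calc ⟪G (x + t • v) - G x, v⟫ ≤ ‖G (x + t • v) - G x‖ * ‖v‖ :=
              real_inner_le_norm _ _
          _ ≤ (κ * ‖(x + t • v) - x‖) * ‖v‖ := by
              gcongr; exact hLip _ _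
          _ = κ * (|t| * ‖v‖) * ‖v‖ := by rw [add_sub_cancel_left, norm_smul]; norm_num
          _ = κ * |t| * ‖v‖ ^ 2 := by ring
          _ = κ * t * ‖v‖ ^ 2 := by rw [abs_of_pos ht.1]
      have : ⟪G (x + t • v) - G x, v⟫ = ⟪G (x + t • v), v⟫ - ⟪G x, v⟫ :=
        inner_sub_left _ _ _
      linarith [this ▸ hineq]
  have := hanti (Set.left_mem_Icc.mpr one_pos.le) (Set.right_mem_Icc.mpr one_pos.le) one_pos.le
  simp only [hh, one_smul, zero_smul, add_zero, zero_mul, zero_pow, mul_zero, sub_zero,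
    one_pow, mul_one] at this
  have hy : x + v = y := by rw [hv]; abel
  rw [hy] at this
  linarith

/-- Analytic core of Theorem 1: if `J` is bounded below with `κ`-Lipschitz gradient `G`,
`α ∈ (0, 2σ/κ)`, and the iterates `ωᵏ = (φᵏ, ψᵏ)`, `ŵᵏ = (φ̂ᵏ, ψ̂ᵏ)` in `E × F`
(with the Euclidean product norm) satisfy the descent bound
`⟪G φᵏ, φ̂ᵏ − φᵏ⟫ ≤ −σ‖ŵᵏ − ωᵏ‖²` and the update `ωᵏ⁺¹ = (1−α)ωᵏ + αŵᵏ`,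
then `(J φᵏ)` is nonincreasing and converges, and `‖ŵᵏ − ωᵏ‖ → 0`. -/
theorem stmt9 {E F : Type*} [NormedAddCommGroup E] [InnerProductSpace ℝ E] [CompleteSpace E]
    [NormedAddCommGroup F] [InnerProductSpace ℝ F]
    (J : E → ℝ) (G : E → E) (hJ : ∀ x, HasGradientAt J (G x) x)
    (hbdd : BddBelow (Set.range J))
    (κ : ℝ) (hκ : 0 < κ) (hLip : ∀ x y, ‖G x - G y‖ ≤ κ * ‖x - y‖)
    (σ : ℝ) (hσ : 0 < σ) (α : ℝ) (hα : α ∈ Set.Ioo (0 : ℝ) (2 * σ / κ))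
    (ω what : ℕ → WithLp 2 (E × F))
    (φ : ℕ → E) (hφ : ∀ k, φ k = (WithLp.equiv 2 (E × F) (ω k)).1)
    (φhat : ℕ → E) (hφhat : ∀ k, φhat k = (WithLp.equiv 2 (E × F) (what k)).1)
    (hdesc : ∀ k, ⟪G (φ k), φhat k - φ k⟫ ≤ -(σ * ‖what k - ω k‖ ^ 2))
    (hupd : ∀ k, ω (k + 1) = (1 - α) • ω k + α • what k) :
    (∀ k, J (φ (k + 1)) ≤ J (φ k)) ∧
      (∃ L : ℝ, Tendsto (fun k => J (φ k)) atTop (nhds L)) ∧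
      Tendsto (fun k => ‖what k - ω k‖) atTop (nhds 0) := by
  obtain ⟨hα0, hα2⟩ := hα
  set r : ℕ → ℝ := fun k => ‖what k - ω k‖ with hr
  set c : ℝ := α * (σ - α * κ / 2) with hc
  have hcpos : 0 < c := by
    apply mul_pos hα0
    have : α * κ < 2 * σ := by
      have := (lt_div_iff₀ hκ).mp hα2
      linarith
    linarith
  -- step update for φ
  have hstep : ∀ k, φ (k + 1) = φ k + α • (φhat k - φ k) := by
    intro k
    rw [hφ, hφhat, hφ, hupd k]
    simp only [WithLp.equiv_apply, WithLp.ofLp_add, WithLp.ofLp_smul, Prod.fst_add, Prod.smul_fst]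
    module
  -- first-component norm bound
  have hfst : ∀ k, ‖φhat k - φ k‖ ^ 2 ≤ r k ^ 2 := by
    intro k
    have h1 : (what k - ω k).fst = φhat k - φ k := by
      rw [hφhat, hφ]; rfl
    have := WithLp.prod_norm_sq_eq_of_L2 (what k - ω k)
    rw [h1] at this
    have h2 : (0:ℝ) ≤ ‖(what k - ω k).snd‖ ^ 2 := sq_nonneg _
    simp only [hr]
    linarith
  -- key descent inequality
  have hkey : ∀ k, J (φ (k + 1)) ≤ J (φ k) - c * r k ^ 2 := by
    intro k
    have hdl := descent_lemma J G hJ κ hLip (φ k) (φ (k + 1))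
    have hdiff : φ (k + 1) - φ k = α • (φhat k - φ k) := by
      rw [hstep k]; abel
    rw [hdiff] at hdl
    have hin : ⟪G (φ k), α • (φhat k - φ k)⟫ ≤ α * (-(σ * r k ^ 2)) := by
      rw [real_inner_smul_right]
      exact mul_le_mul_of_nonneg_left (hdesc k) hα0.le
    have hnorm : ‖α • (φhat k - φ k)‖ ^ 2 ≤ α ^ 2 * r k ^ 2 := by
      rw [norm_smul, mul_pow]
      have : |α| ^ 2 = α ^ 2 := by rw [sq_abs]
      rw [Real.norm_eq_abs, this]
      exact mul_le_mul_of_nonneg_left (hfst k) (sq_nonneg α)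
    have h3 : κ / 2 * ‖α • (φhat k - φ k)‖ ^ 2 ≤ κ / 2 * (α ^ 2 * r k ^ 2) :=
      mul_le_mul_of_nonneg_left hnorm (by positivity)
    have : J (φ (k + 1)) ≤ J (φ k) + α * (-(σ * r k ^ 2)) + κ / 2 * (α ^ 2 * r k ^ 2) := by
      linarith
    calc J (φ (k + 1)) ≤ J (φ k) + α * (-(σ * r k ^ 2)) + κ / 2 * (α ^ 2 * r k ^ 2) := this
      _ = J (φ k) - c * r k ^ 2 := by rw [hc]; ring
  have hmono : ∀ k, J (φ (k + 1)) ≤ J (φ k) := by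
    intro k
    have := hkey k
    nlinarith [sq_nonneg (r k), hcpos]
  refine ⟨hmono, ?_, ?_⟩
  · -- convergence
    have hanti : Antitone fun k => J (φ k) := antitone_nat_of_succ_le hmono
    have hbb : BddBelow (Set.range fun k => J (φ k)) := by
      obtain ⟨m, hm⟩ := hbdd
      exact ⟨m, by rintro _ ⟨k, rfl⟩; exact hm ⟨φ k, rfl⟩⟩
    exact ⟨_, tendsto_atTop_ciInf hanti hbb⟩
  · -- residual tends to zero
    have hanti : Antitone fun k => J (φ k) := antitone_nat_of_succ_le hmono
    have hbb : BddBelow (Set.range fun k => J (φ k)) := by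
      obtain ⟨m, hm⟩ := hbdd
      exact ⟨m, by rintro _ ⟨k, rfl⟩; exact hm ⟨φ k, rfl⟩⟩
    have hL : Tendsto (fun k => J (φ k)) atTop (nhds (⨅ k, J (φ k))) :=
      tendsto_atTop_ciInf hanti hbb
    have hL' : Tendsto (fun k => J (φ (k + 1))) atTop (nhds (⨅ k, J (φ k))) :=
      hL.comp (tendsto_add_atTop_nat 1)
    have hdiff0 : Tendsto (fun k => J (φ k) - J (φ (k + 1))) atTop (nhds 0) := by
      simpa using hL.sub hL'
    have hsq : Tendsto (fun k => c * r k ^ 2) atTop (nhds 0) := by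
      apply squeeze_zero (fun k => by positivity) (fun k => by linarith [hkey k]) hdiff0
    have hsq2 : Tendsto (fun k => r k ^ 2) atTop (nhds 0) := by
      have := hsq.const_mul c⁻¹
      simp only [inv_mul_cancel_left₀ hcpos.ne', mul_zero] at this
      exact this
    have := (Real.continuous_sqrt.tendsto 0).comp hsq2
    simp only [Real.sqrt_zero, Function.comp_def] at this
    have heq : ∀ k, Real.sqrt (r k ^ 2) = r k := fun k => Real.sqrt_sq (norm_nonneg _)
    simpa [heq] using this
end
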